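/- The function h(x) = 9x + log(1−2x) − log x − 3 has exactly one zero l in the open interval (0, 1/4), and this zero satisfies l < 1/6. -/

import Mathlib

/-!
On `(0, 1/2)` one has `h'(x) = (6x - 1)(1 - 3x) / (x (1 - 2x))`, so `h` decreases on `(0, 1/6]`
and increases on `[1/6, 1/3]`. Since `h(1/20) > 0 > h(1/6)`, there is a root in `(1/20, 1/6)`,
unique on `(0, 1/6]`; on `[1/6, 1/4]` there is none because there `h ≤ h(1/4) = log 2 - 3/4 < 0`.
-/

open Real Set

noncomputable def hfun (x : ℝ) : ℝ := 9 * x + log (1 - 2 * x) - log x - 3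

lemma hasDerivAt_hfun {x : ℝ} (hx0 : 0 < x) (hx : x < 1 / 2) :
    HasDerivAt hfun ((6 * x - 1) * (1 - 3 * x) / (x * (1 - 2 * x))) x := by
  have hx2 : 1 - 2 * x ≠ 0 := by linarith
  have hlog : HasDerivAt (fun y => log (1 - 2 * y)) (-2 / (1 - 2 * x)) x := by
    simpa using (((hasDerivAt_id x).const_mul 2).const_sub 1).log hx2
  have : HasDerivAt hfun (9 * 1 + -2 / (1 - 2 * x) - x⁻¹) x :=
    ((((hasDerivAt_id x).const_mul 9).add hlog).sub (hasDerivAt_log hx0.ne')).sub_const 3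
  refine this.congr_deriv ?_
  field_simp
  ring

lemma continuousOn_hfun {s : Set ℝ} (hs : s ⊆ Ioo 0 (1 / 2)) : ContinuousOn hfun s :=
  fun _ hx => (hasDerivAt_hfun (hs hx).1 (hs hx).2).continuousAt.continuousWithinAt

lemma strictAntiOn_hfun : StrictAntiOn hfun (Ioc 0 (1 / 6)) := by
  refine strictAntiOn_of_deriv_neg (convex_Ioc _ _)
    (continuousOn_hfun fun x hx => ⟨hx.1, by linarith [hx.2]⟩) fun x hx => ?_
  rw [interior_Ioc] at hx
  obtain ⟨hx0, hx6⟩ := hx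
  rw [(hasDerivAt_hfun hx0 (by linarith)).deriv]
  exact div_neg_of_neg_of_pos (mul_neg_of_neg_of_pos (by linarith) (by linarith))
    (mul_pos hx0 (by linarith))

lemma strictMonoOn_hfun : StrictMonoOn hfun (Icc (1 / 6) (1 / 3)) := by
  refine strictMonoOn_of_deriv_pos (convex_Icc _ _)
    (continuousOn_hfun fun x hx => ⟨by linarith [hx.1], by linarith [hx.2]⟩) fun x hx => ?_
  rw [interior_Icc] at hx
  obtain ⟨hx6, hx3⟩ := hx
  rw [(hasDerivAt_hfun (by linarith) (by linarith)).deriv]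
  exact div_pos (mul_pos (by linarith) (by linarith)) (mul_pos (by linarith) (by linarith))

lemma hfun_eq {x : ℝ} (hx0 : 0 < x) (hx : x < 1 / 2) :
    hfun x = log ((1 - 2 * x) / x) + 9 * x - 3 := by
  rw [hfun, log_div (by linarith) hx0.ne']
  ring

lemma hfun_one_twentieth_pos : 0 < hfun (1 / 20) := by
  have h16 : log 16 ≤ log 18 := log_le_log (by norm_num) (by norm_num)
  have h16_eq : log 16 = 4 * log 2 := by
    rw [show (16 : ℝ) = 2 ^ 4 by norm_num, log_pow]
    norm_num
  rw [hfun_eq (by norm_num) (by norm_num)]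
  norm_num
  linarith [log_two_gt_d9]

lemma hfun_one_sixth_neg : hfun (1 / 6) < 0 := by
  have h4 : log 4 = 2 * log 2 := by
    rw [show (4 : ℝ) = 2 ^ 2 by norm_num, log_pow]
    norm_num
  rw [hfun_eq (by norm_num) (by norm_num)]
  norm_num
  linarith [log_two_lt_d9]

lemma hfun_one_fourth_neg : hfun (1 / 4) < 0 := by
  rw [hfun_eq (by norm_num) (by norm_num)]
  norm_num
  linarith [log_two_lt_d9]

lemma hfun_neg_of_mem_Icc {x : ℝ} (hx : x ∈ Icc (1 / 6) (1 / 4)) : hfun x < 0 :=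
  (strictMonoOn_hfun.monotoneOn ⟨hx.1, by linarith [hx.2]⟩ ⟨by norm_num, by norm_num⟩ hx.2).trans_lt
    hfun_one_fourth_neg

theorem unique_root_in_Ioo :
    ∃ l : ℝ, l ∈ Set.Ioo (0 : ℝ) (1/4) ∧
      9 * l + Real.log (1 - 2*l) - Real.log l - 3 = 0 ∧
      l < 1/6 ∧
      ∀ l' ∈ Set.Ioo (0 : ℝ) (1/4),
        9 * l' + Real.log (1 - 2*l') - Real.log l' - 3 = 0 → l' = l := by
  obtain ⟨l, hl, hl_root⟩ := intermediate_value_Icc' (by norm_num : (1 / 20 : ℝ) ≤ 1 / 6)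
    (continuousOn_hfun fun x hx => ⟨by linarith [hx.1], by linarith [hx.2]⟩)
    ⟨hfun_one_sixth_neg.le, hfun_one_twentieth_pos.le⟩
  have lt_one_sixth : ∀ x ∈ Ioo (0 : ℝ) (1 / 4), hfun x = 0 → x < 1 / 6 := fun x hx hx_root =>
    not_le.1 fun h => (hfun_neg_of_mem_Icc ⟨h, hx.2.le⟩).ne hx_root
  have hl_mem : l ∈ Ioo (0 : ℝ) (1 / 4) := ⟨by linarith [hl.1], by linarith [hl.2]⟩
  have hl6 := lt_one_sixth l hl_mem hl_root
  refine ⟨l, hl_mem, hl_root, hl6, fun l' hl' hl'_root => ?_⟩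
  exact strictAntiOn_hfun.injOn ⟨hl'.1, (lt_one_sixth l' hl' hl'_root).le⟩ ⟨hl_mem.1, hl6.le⟩
    (hl'_root.trans hl_root.symm)
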